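/- arXiv:2403.13297 — 4 statements merged into one kernel-verified Lean document; each statement's English description precedes it below -/
import Mathlib

section
/- Let V ⊂ ℝⁿ be a finite set with convex hull B, let f : ℝⁿ × ℝᵐ → ℝⁿ, C ∈ ℝ^{1×n} and ε ≥ 0. Suppose μ : ℝⁿ → ℝᵐ is affine on B (μ(s) = D s + e for all s ∈ B with D ∈ ℝ^{m×n}, e ∈ ℝᵐ), and suppose there exist A₀ ∈ ℝ^{n×n}, B₀ ∈ ℝ^{n×m}, c₀ ∈ ℝⁿ such that |C f(s, μ(s)) − C(A₀ s + B₀ μ(s) + c₀)| ≤ ε for all s ∈ B. If the repulsion condition C f(v, μ(v)) ≤ −2ε holds for every v ∈ V, then C f(s, μ(s)) ≤ 0 for every s ∈ B. -/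
open Matrix

/-- Key step of Theorem 1: if the policy `μ` is affine on the polytope `B = convexHull V`,
`ε` is an approximation measure (witnessed by `A₀, B₀, c₀`) along `μ` on `B`, and the
repulsion condition `C f(v, μ(v)) ≤ -2ε` holds at every vertex `v ∈ V`, then
`C f(s, μ(s)) ≤ 0` everywhere on `B`. -/
theorem repulsion_on_buffer {n m : ℕ}
    (V : Finset (Fin n → ℝ)) (B : Set (Fin n → ℝ)) (hB : B = convexHull ℝ (V : Set (Fin n → ℝ)))
    (f : (Fin n → ℝ) → (Fin m → ℝ) → (Fin n → ℝ))
    (C : Fin n → ℝ) (ε : ℝ) (hε : 0 ≤ ε)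
    (μ : (Fin n → ℝ) → (Fin m → ℝ))
    (D : Matrix (Fin m) (Fin n) ℝ) (e : Fin m → ℝ)
    (hμ : ∀ s ∈ B, μ s = D *ᵥ s + e)
    (A₀ : Matrix (Fin n) (Fin n) ℝ) (B₀ : Matrix (Fin n) (Fin m) ℝ) (c₀ : Fin n → ℝ)
    (happrox : ∀ s ∈ B, |C ⬝ᵥ f s (μ s) - C ⬝ᵥ (A₀ *ᵥ s + B₀ *ᵥ μ s + c₀)| ≤ ε)
    (hrep : ∀ v ∈ V, C ⬝ᵥ f v (μ v) ≤ -(2 * ε)) :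
    ∀ s ∈ B, C ⬝ᵥ f s (μ s) ≤ 0 := by
  set M : Matrix (Fin n) (Fin n) ℝ := A₀ + B₀ * D with hM
  set k : ℝ := C ⬝ᵥ (B₀ *ᵥ e + c₀) with hk
  have hL : ∀ s ∈ B, C ⬝ᵥ (A₀ *ᵥ s + B₀ *ᵥ μ s + c₀) = C ⬝ᵥ (M *ᵥ s) + k := by
    intro s hs
    rw [hμ s hs, hM, hk]
    simp [Matrix.add_mulVec, Matrix.mulVec_add, ← Matrix.mulVec_mulVec,
      dotProduct_add]
    ring
  have hlin : IsLinearMap ℝ (fun x : Fin n → ℝ => C ⬝ᵥ (M *ᵥ x)) := by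
    constructor
    · intro x y; rw [Matrix.mulVec_add, dotProduct_add]
    · intro c x; rw [Matrix.mulVec_smul, dotProduct_smul, smul_eq_mul]
  have hconv : Convex ℝ {x : Fin n → ℝ | C ⬝ᵥ (M *ᵥ x) ≤ -ε - k} :=
    convex_halfSpace_le hlin _
  have hsub : B ⊆ {x : Fin n → ℝ | C ⬝ᵥ (M *ᵥ x) ≤ -ε - k} := by
    rw [hB]
    apply convexHull_min _ hconv
    intro v hv
    have hvB : v ∈ B := hB ▸ subset_convexHull ℝ _ hv
    have h1 := happrox v hvB
    have h2 := hrep v hv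
    rw [hL v hvB] at h1
    have := abs_le.mp h1
    simp only [Set.mem_setOf_eq]
    linarith [this.1]
  intro s hs
  have h1 := happrox s hs
  rw [hL s hs] at h1
  have h2 := hsub hs
  simp only [Set.mem_setOf_eq] at h2
  have := abs_le.mp h1
  linarith [this.2]
end

section
/- (Theorem 1, continuous time.) Let S ⊂ ℝⁿ be compact and convex, A ⊂ ℝᵐ be compact and convex, f : ℝⁿ × ℝᵐ → ℝⁿ, C ∈ ℝ^{1×n}, d ∈ ℝ, r > 0, and let B := {s ∈ S : C s ∈ [d − r, d]} be the convex hull of a finite vertex set V ⊂ ℝⁿ. Let μ : S → A be a policy that is affine on B, i.e. μ(s) = D s + e on B for some D ∈ ℝ^{m×n}, e ∈ ℝᵐ. Let ε ≥ 0 be an approximation measure, i.e. there exist A₀ ∈ ℝ^{n×n}, B₀ ∈ ℝ^{n×m}, c₀ ∈ ℝⁿ with |C f(s, a) − C(A₀ s + B₀ a + c₀)| ≤ ε for all s ∈ B and all a ∈ A. If the repulsion condition C f(v, μ(v)) ≤ −2ε holds for every v ∈ V, then every differentiable trajectory s : [0, ∞) → ℝⁿ satisfying s(t) ∈ S for all t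 ≥ 0, s'(t) = f(s(t), μ(s(t))) for all t ≥ 0, and C s(0) < d, satisfies C s(t) < d for all t ≥ 0. -/
/-!
On the buffer `B` the nominal closed-loop model `x ↦ C (A₀ x + B₀ (D x + e) + c₀)` is affine, so
its maximum over `B = conv V` is attained at a vertex, where the repulsion condition and the
approximation bound make it at most `-ε`; hence `C f(x, μ x) ≤ 0` throughout `B`. Along a
trajectory, `g t = C s(t)` therefore cannot increase while it lies in `(d - r, d)`. If `g` ever
reached `d`, just before the first such time it would lie in that band and be nonincreasing,
so it could not have climbed to `d`.
-/

open Matrix Set Filter Topology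

theorem HasDerivAt.const_dotProduct {ι : Type*} [Fintype ι] {s : ℝ → ι → ℝ} {s' : ι → ℝ}
    {t : ℝ} (C : ι → ℝ) (hs : HasDerivAt s s' t) :
    HasDerivAt (fun τ => C ⬝ᵥ s τ) (C ⬝ᵥ s') t :=
  (LinearMap.toContinuousLinearMap (dotProductBilin ℝ ℝ C)).hasFDerivAt.comp_hasDerivAt t hs

theorem lt_of_hasDerivAt_nonpos_of_mem_Ioo {g g' : ℝ → ℝ} {t₀ a b : ℝ} (hab : a < b)
    (hg : ∀ t, t₀ ≤ t → HasDerivAt g (g' t) t)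
    (hbuf : ∀ t, t₀ ≤ t → g t ∈ Ioo a b → g' t ≤ 0)
    (h₀ : g t₀ < b) : ∀ t, t₀ ≤ t → g t < b := by
  by_contra! ⟨t₁, ht₁, hbt₁⟩
  have hcont : ContinuousOn g (Ici t₀) := fun t ht => (hg t ht).continuousAt.continuousWithinAt
  have hbdd : BddBelow (Ici t₀ ∩ g ⁻¹' Ici b) := ⟨t₀, fun _ h => h.1⟩
  obtain ⟨hT₀le, hbT⟩ : sInf (Ici t₀ ∩ g ⁻¹' Ici b) ∈ Ici t₀ ∩ g ⁻¹' Ici b :=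
    (hcont.preimage_isClosed_of_isClosed isClosed_Ici isClosed_Ici).csInf_mem
      ⟨t₁, ht₁, hbt₁⟩ hbdd
  set T := sInf (Ici t₀ ∩ g ⁻¹' Ici b)
  have hbefore : ∀ t ∈ Ico t₀ T, g t < b := fun t ht =>
    not_le.1 fun h => (csInf_le hbdd ⟨ht.1, h⟩).not_gt ht.2
  have hT₀ : t₀ < T := hT₀le.lt_of_ne fun h => (h ▸ h₀).not_ge hbT
  have hnear : ∀ᶠ t in 𝓝[<] T, t₀ < t ∧ a < g t :=
    (Filter.Eventually.and (Ioi_mem_nhds hT₀)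
      ((hg T hT₀.le).continuousAt.eventually (lt_mem_nhds (hab.trans_le hbT)))).filter_mono
      nhdsWithin_le_nhds
  obtain ⟨l, hlT, hl⟩ := mem_nhdsLT_iff_exists_Ioo_subset.1 hnear
  obtain ⟨t', hlt', ht'T⟩ := exists_between (mem_Iio.1 hlT)
  have ht₀t' : t₀ < t' := (hl ⟨hlt', ht'T⟩).1
  have hanti : AntitoneOn g (Icc t' T) := by
    refine antitoneOn_of_hasDerivWithinAt_nonpos (f' := g') (convex_Icc t' T)
      (hcont.mono fun t ht => ht₀t'.le.trans ht.1) (fun t ht => ?_) (fun t ht => ?_) <;>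
      rw [interior_Icc] at ht
    · exact (hg t (ht₀t'.le.trans ht.1.le)).hasDerivWithinAt
    · have hlt : t ∈ Ioo l T := ⟨hlt'.trans ht.1, ht.2⟩
      exact hbuf t (ht₀t'.le.trans ht.1.le)
        ⟨(hl hlt).2, hbefore t ⟨(hl hlt).1.le, ht.2⟩⟩
  have hgT : g T ≤ g t' := hanti ⟨le_rfl, ht'T.le⟩ ⟨ht'T.le, le_rfl⟩ ht'T.le
  exact (hbefore t' ⟨ht₀t'.le, ht'T⟩).not_ge (hbT.trans hgT)

theorem nonpos_on_convexHull_of_abs_sub_le {E : Type*} [AddCommGroup E] [Module ℝ E]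
    {F φ : E → ℝ} {V : Set E} {ε : ℝ} (hφ : ConvexOn ℝ (convexHull ℝ V) φ)
    (happrox : ∀ x ∈ convexHull ℝ V, |F x - φ x| ≤ ε)
    (hrep : ∀ v ∈ V, F v ≤ -(2 * ε)) :
    ∀ x ∈ convexHull ℝ V, F x ≤ 0 := by
  intro x hx
  obtain ⟨v, hv, hxv⟩ := hφ.exists_ge_of_mem_convexHull (subset_convexHull ℝ V) hx
  have hFx := (abs_le.1 (happrox x hx)).2
  have hFv := (abs_le.1 (happrox v (subset_convexHull ℝ V hv))).1
  linarith [hrep v hv]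

theorem convexOn_dotProduct_closedLoop {ι κ : Type*} [Fintype ι] [Fintype κ]
    {s : Set (ι → ℝ)} (hs : Convex ℝ s) (C : ι → ℝ) (A₀ : Matrix ι ι ℝ) (B₀ : Matrix ι κ ℝ)
    (c₀ : ι → ℝ) (D : Matrix κ ι ℝ) (e : κ → ℝ) :
    ConvexOn ℝ s fun x => C ⬝ᵥ (A₀ *ᵥ x + B₀ *ᵥ (D *ᵥ x + e) + c₀) := by
  have hsplit : (fun x => C ⬝ᵥ (A₀ *ᵥ x + B₀ *ᵥ (D *ᵥ x + e) + c₀)) =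
      fun x => (dotProductBilin ℝ ℝ C ∘ₗ (A₀ + B₀ * D).mulVecLin) x + C ⬝ᵥ (B₀ *ᵥ e + c₀) := by
    funext x
    simp only [LinearMap.comp_apply, mulVecLin_apply, dotProductBilin_apply_apply, add_mulVec,
      mulVec_add, mulVec_mulVec, dotProduct_add]
    ring
  rw [hsplit]
  exact (LinearMap.convexOn _ hs).add_const _

theorem policed_rl_safety_continuous_general {n m : ℕ}
    (S : Set (Fin n → ℝ))
    (A : Set (Fin m → ℝ))
    (f : (Fin n → ℝ) → (Fin m → ℝ) → (Fin n → ℝ))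
    (C : Fin n → ℝ) (d r : ℝ) (hr : 0 < r)
    (B : Set (Fin n → ℝ)) (hBdef : B = {s ∈ S | C ⬝ᵥ s ∈ Set.Icc (d - r) d})
    (V : Finset (Fin n → ℝ)) (hBhull : B = convexHull ℝ (V : Set (Fin n → ℝ)))
    (μ : (Fin n → ℝ) → (Fin m → ℝ)) (hμadm : ∀ s ∈ S, μ s ∈ A)
    (D : Matrix (Fin m) (Fin n) ℝ) (e : Fin m → ℝ)
    (hμaff : ∀ s ∈ B, μ s = D *ᵥ s + e)
    (ε : ℝ)
    (A₀ : Matrix (Fin n) (Fin n) ℝ) (B₀ : Matrix (Fin n) (Fin m) ℝ) (c₀ : Fin n → ℝ)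
    (happrox : ∀ s ∈ B, ∀ a ∈ A, |C ⬝ᵥ f s a - C ⬝ᵥ (A₀ *ᵥ s + B₀ *ᵥ a + c₀)| ≤ ε)
    (hrep : ∀ v ∈ V, C ⬝ᵥ f v (μ v) ≤ -(2 * ε)) :
    ∀ s : ℝ → (Fin n → ℝ),
      (∀ t : ℝ, 0 ≤ t → DifferentiableAt ℝ s t) →
      (∀ t : ℝ, 0 ≤ t → s t ∈ S) →
      (∀ t : ℝ, 0 ≤ t → deriv s t = f (s t) (μ (s t))) →
      C ⬝ᵥ s 0 < d →
      ∀ t : ℝ, 0 ≤ t → C ⬝ᵥ s t < d := by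
  intro s hdiff hS hode h₀
  have hbuf : ∀ x ∈ B, C ⬝ᵥ f x (μ x) ≤ 0 := by
    have hBS : B ⊆ S := hBdef ▸ fun x hx => hx.1
    subst hBhull
    refine nonpos_on_convexHull_of_abs_sub_le
      (convexOn_dotProduct_closedLoop (convex_convexHull ℝ _) C A₀ B₀ c₀ D e)
      (fun x hx => ?_) hrep
    simpa only [hμaff x hx] using happrox x hx (μ x) (hμadm x (hBS hx))
  refine lt_of_hasDerivAt_nonpos_of_mem_Ioo (sub_lt_self d hr)
    (fun t ht => hode t ht ▸ (hdiff t ht).hasDerivAt.const_dotProduct C)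
    (fun t ht hCs => hbuf (s t) ?_) h₀
  exact hBdef ▸ ⟨hS t ht, hCs.1.le, hCs.2.le⟩

/-- **Theorem 1 (continuous time).** Let `S ⊆ ℝⁿ` be compact convex, `A ⊆ ℝᵐ` compact
convex, `B := {s ∈ S : C s ∈ [d - r, d]}` the buffer, given as the convex hull of a finite
vertex set `V`. Let `μ : S → A` be a policy which is affine on `B`, and let `ε ≥ 0` be an
approximation measure with witnesses `A₀, B₀, c₀`. If the repulsion condition
`C f(v, μ(v)) ≤ -2ε` holds at every vertex `v ∈ V`, then every differentiable closed-loop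
trajectory remaining in `S` and starting with `C s(0) < d` satisfies `C s(t) < d` for all
`t ≥ 0`. -/
theorem policed_rl_safety_continuous {n m : ℕ}
    (S : Set (Fin n → ℝ)) (hScomp : IsCompact S) (hSconv : Convex ℝ S)
    (A : Set (Fin m → ℝ)) (hAcomp : IsCompact A) (hAconv : Convex ℝ A)
    (f : (Fin n → ℝ) → (Fin m → ℝ) → (Fin n → ℝ))
    (C : Fin n → ℝ) (d r : ℝ) (hr : 0 < r)
    (B : Set (Fin n → ℝ)) (hBdef : B = {s ∈ S | C ⬝ᵥ s ∈ Set.Icc (d - r) d})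
    (V : Finset (Fin n → ℝ)) (hBhull : B = convexHull ℝ (V : Set (Fin n → ℝ)))
    (μ : (Fin n → ℝ) → (Fin m → ℝ)) (hμadm : ∀ s ∈ S, μ s ∈ A)
    (D : Matrix (Fin m) (Fin n) ℝ) (e : Fin m → ℝ)
    (hμaff : ∀ s ∈ B, μ s = D *ᵥ s + e)
    (ε : ℝ) (hε : 0 ≤ ε)
    (A₀ : Matrix (Fin n) (Fin n) ℝ) (B₀ : Matrix (Fin n) (Fin m) ℝ) (c₀ : Fin n → ℝ)
    (happrox : ∀ s ∈ B, ∀ a ∈ A, |C ⬝ᵥ f s a - C ⬝ᵥ (A₀ *ᵥ s + B₀ *ᵥ a + c₀)| ≤ ε)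
    (hrep : ∀ v ∈ V, C ⬝ᵥ f v (μ v) ≤ -(2 * ε)) :
    ∀ s : ℝ → (Fin n → ℝ),
      (∀ t : ℝ, 0 ≤ t → DifferentiableAt ℝ s t) →
      (∀ t : ℝ, 0 ≤ t → s t ∈ S) →
      (∀ t : ℝ, 0 ≤ t → deriv s t = f (s t) (μ (s t))) →
      C ⬝ᵥ s 0 < d →
      ∀ t : ℝ, 0 ≤ t → C ⬝ᵥ s t < d :=
  policed_rl_safety_continuous_general S A f C d r hr B hBdef V hBhull μ hμadm D e hμaff ε A₀ B₀ c₀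
    happrox hrep
end

section
/- Let V ⊂ ℝⁿ be a finite set with convex hull B, let f : ℝⁿ × ℝᵐ → ℝⁿ, C ∈ ℝ^{1×n}, ε ≥ 0 and δt > 0. Suppose μ : ℝⁿ → ℝᵐ is affine on B (μ(s) = D s + e for all s ∈ B), and suppose there exist A₀ ∈ ℝ^{n×n}, B₀ ∈ ℝ^{n×m}, c₀ ∈ ℝⁿ such that |C f(s, μ(s)) − C(A₀ s + B₀ μ(s) + c₀)| ≤ ε for all s ∈ B. If the discrete repulsion condition C f(v, μ(v)) · δt ≤ −2ε δt holds for every v ∈ V, then for every s ∈ B the discrete update s⁺ := s + f(s, μ(s)) δt satisfies C(s⁺ − s) ≤ 0. -/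
open Matrix

/-- Discrete analogue of the buffer repulsion extension: if the policy `μ` is affine on the
polytope `B = convexHull V`, `ε` is an approximation measure along `μ` on `B` (witnessed by
`A₀, B₀, c₀`), and the discrete repulsion condition `C f(v, μ(v)) δt ≤ -2 ε δt` holds at
every vertex `v ∈ V`, then for every `s ∈ B` the discrete update
`s⁺ = s + f(s, μ(s)) δt` satisfies `C (s⁺ - s) ≤ 0`. -/
theorem discrete_repulsion_on_buffer {n m : ℕ}
    (V : Finset (Fin n → ℝ)) (B : Set (Fin n → ℝ)) (hB : B = convexHull ℝ (V : Set (Fin n → ℝ)))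
    (f : (Fin n → ℝ) → (Fin m → ℝ) → (Fin n → ℝ))
    (C : Fin n → ℝ) (ε : ℝ) (hε : 0 ≤ ε) (δt : ℝ) (hδt : 0 < δt)
    (μ : (Fin n → ℝ) → (Fin m → ℝ))
    (D : Matrix (Fin m) (Fin n) ℝ) (e : Fin m → ℝ)
    (hμ : ∀ s ∈ B, μ s = D *ᵥ s + e)
    (A₀ : Matrix (Fin n) (Fin n) ℝ) (B₀ : Matrix (Fin n) (Fin m) ℝ) (c₀ : Fin n → ℝ)
    (happrox : ∀ s ∈ B, |C ⬝ᵥ f s (μ s) - C ⬝ᵥ (A₀ *ᵥ s + B₀ *ᵥ μ s + c₀)| ≤ ε)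
    (hrep : ∀ v ∈ V, C ⬝ᵥ f v (μ v) * δt ≤ -(2 * ε * δt)) :
    ∀ s ∈ B, C ⬝ᵥ ((s + δt • f s (μ s)) - s) ≤ 0 := by
  subst hB
  set L : (Fin n → ℝ) → ℝ := fun x => C ⬝ᵥ ((A₀ + B₀ * D) *ᵥ x) with hL
  have hlin : IsLinearMap ℝ L := by
    constructor
    · intro x y
      simp [hL, Matrix.mulVec_add, dotProduct_add]
    · intro c x
      simp [hL, Matrix.mulVec_smul]
  set k : ℝ := C ⬝ᵥ (B₀ *ᵥ e + c₀) with hk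
  have heq : ∀ s ∈ convexHull ℝ (V : Set (Fin n → ℝ)),
      C ⬝ᵥ (A₀ *ᵥ s + B₀ *ᵥ μ s + c₀) = L s + k := by
    intro s hs
    rw [hμ s hs]
    simp [hL, hk, Matrix.add_mulVec, Matrix.mulVec_add, ← Matrix.mulVec_mulVec,
      dotProduct_add]
    ring
  have hconv : (convexHull ℝ (V : Set (Fin n → ℝ))) ⊆ {x | L x ≤ -ε - k} := by
    apply convexHull_min
    · intro v hv
      have hvB : v ∈ convexHull ℝ (V : Set (Fin n → ℝ)) := subset_convexHull ℝ _ hv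
      have h1 := abs_le.mp (happrox v hvB)
      have h2 := hrep v hv
      have h2' : C ⬝ᵥ f v (μ v) ≤ -(2 * ε) := by nlinarith
      have h3 := heq v hvB
      simp only [Set.mem_setOf_eq]
      linarith [h1.1]
    · exact convex_halfSpace_le hlin _
  intro s hs
  have hLs := hconv hs
  have h1 := abs_le.mp (happrox s hs)
  have h3 := heq s hs
  have hf : C ⬝ᵥ f s (μ s) ≤ 0 := by
    simp only [Set.mem_setOf_eq] at hLs
    linarith [h1.2]
  have : C ⬝ᵥ ((s + δt • f s (μ s)) - s) = δt * (C ⬝ᵥ f s (μ s)) := by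
    simp [dotProduct_sub, dotProduct_add, dotProduct_smul, smul_eq_mul]
  rw [this]
  nlinarith
end

section
/- (Corollary 1, discrete time.) Let S ⊂ ℝⁿ be compact and convex, A ⊂ ℝᵐ be compact and convex, f : ℝⁿ × ℝᵐ → ℝⁿ, C ∈ ℝ^{1×n}, d ∈ ℝ, r > 0, δt > 0, and let B := {s ∈ S : C s ∈ [d − r, d]} be the convex hull of a finite vertex set V ⊂ ℝⁿ. Let μ : S → A be affine on B (μ(s) = D s + e on B for some D ∈ ℝ^{m×n}, e ∈ ℝᵐ), and let ε ≥ 0 be an approximation measure with witnesses A₀, B₀, c₀, i.e. |C f(s, a) − C(A₀ s + B₀ a + c₀)| ≤ ε for all s ∈ B, a ∈ A. Assume: (i) the discrete repulsion condition C((v + f(v, μ(v)) δt) − v) ≤ −2ε δt holds for every v ∈ V; and (ii) the buffer is wide enough: C((s + f(s, μ(s)) δt) − s) ≤ r for every s ∈ S with C s < d. Then every sequence (s_j)_{j ∈ ℕ} with s₀ ∈ S, C s₀ < d, and s_{j+1} = s_j + f(s_j, μ(s_j)) δt ∈ S for all j, satisfies C s_j < d for all j ∈ ℕ. -/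
/-!
On the buffer the closed-loop drift `x ↦ C f(x, μ x)` is within `ε` of the affine function
`x ↦ C (A₀ x + B₀ (D x + e) + c₀)`. The repulsion condition makes the drift at most `-2ε` at the
vertices, so the affine function is at most `-ε` there, hence on their convex hull, which is the
whole buffer; so the drift is nonpositive on the buffer. A trajectory therefore never increases
`C s` inside the buffer, and below the buffer a single step raises it by at most `r`.
-/

open Matrix

theorem dotProduct_affine_comp_affine {R ι κ : Type*} [CommRing R] [Fintype ι] [Fintype κ]
    (C : ι → R) (A₀ : Matrix ι ι R) (B₀ : Matrix ι κ R) (c₀ : ι → R)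
    (D : Matrix κ ι R) (e : κ → R) (x : ι → R) :
    C ⬝ᵥ (A₀ *ᵥ x + B₀ *ᵥ (D *ᵥ x + e) + c₀)
      = C ᵥ* (A₀ + B₀ * D) ⬝ᵥ x + C ⬝ᵥ (B₀ *ᵥ e + c₀) := by
  simp only [mulVec_add, dotProduct_add, dotProduct_mulVec, vecMul_add, add_dotProduct,
    vecMul_vecMul]
  ring

section

variable {𝕜 : Type*} [Field 𝕜] [LinearOrder 𝕜] [IsStrictOrderedRing 𝕜]

theorem nonpos_of_mem_convexHull_of_abs_sub_le {E : Type*} [AddCommGroup E] [Module 𝕜 E]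
    {V : Set E} {φ g : E → 𝕜} {ε : 𝕜}
    (hg : ConvexOn 𝕜 (convexHull 𝕜 V) g)
    (hφg : ∀ x ∈ convexHull 𝕜 V, |φ x - g x| ≤ ε) (hV : ∀ v ∈ V, φ v ≤ -(2 * ε))
    {x : E} (hx : x ∈ convexHull 𝕜 V) : φ x ≤ 0 := by
  have hVg : V ⊆ {y ∈ convexHull 𝕜 V | g y ≤ -ε} := fun v hv => by
    have hv' := subset_convexHull 𝕜 V hv
    exact ⟨hv', by linarith [(abs_le.mp (hφg v hv')).1, hV v hv]⟩
  have hgx := (convexHull_min hVg (hg.convex_le (-ε)) hx).2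
  linarith [(abs_le.mp (hφg x hx)).2]

theorem convexOn_dotProduct_affine_comp_affine {ι κ : Type*} [Fintype ι] [Fintype κ]
    (C : ι → 𝕜) (A₀ : Matrix ι ι 𝕜) (B₀ : Matrix ι κ 𝕜) (c₀ : ι → 𝕜)
    (D : Matrix κ ι 𝕜) (e : κ → 𝕜) {s : Set (ι → 𝕜)} (hs : Convex 𝕜 s) :
    ConvexOn 𝕜 s fun x => C ⬝ᵥ (A₀ *ᵥ x + B₀ *ᵥ (D *ᵥ x + e) + c₀) := by
  simp only [dotProduct_affine_comp_affine]
  exact ((dotProductBilin 𝕜 𝕜 (C ᵥ* (A₀ + B₀ * D))).convexOn hs).add_const _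

theorem lt_of_step_le_of_buffer {a b d r : 𝕜} (ha : a < d) (hfar : b - a ≤ r)
    (hnear : d - r ≤ a → b ≤ a) : b < d := by
  rcases le_or_gt (d - r) a with hbuf | hbelow
  · linarith [hnear hbuf]
  · linarith

end

theorem policed_rl_safety_discrete_general {n m : ℕ}
    (S : Set (Fin n → ℝ))
    (A : Set (Fin m → ℝ))
    (f : (Fin n → ℝ) → (Fin m → ℝ) → (Fin n → ℝ))
    (C : Fin n → ℝ) (d r : ℝ) (δt : ℝ) (hδt : 0 < δt)
    (B : Set (Fin n → ℝ)) (hBdef : B = {s ∈ S | C ⬝ᵥ s ∈ Set.Icc (d - r) d})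
    (V : Finset (Fin n → ℝ)) (hBhull : B = convexHull ℝ (V : Set (Fin n → ℝ)))
    (μ : (Fin n → ℝ) → (Fin m → ℝ)) (hμadm : ∀ s ∈ S, μ s ∈ A)
    (D : Matrix (Fin m) (Fin n) ℝ) (e : Fin m → ℝ)
    (hμaff : ∀ s ∈ B, μ s = D *ᵥ s + e)
    (ε : ℝ)
    (A₀ : Matrix (Fin n) (Fin n) ℝ) (B₀ : Matrix (Fin n) (Fin m) ℝ) (c₀ : Fin n → ℝ)
    (happrox : ∀ s ∈ B, ∀ a ∈ A, |C ⬝ᵥ f s a - C ⬝ᵥ (A₀ *ᵥ s + B₀ *ᵥ a + c₀)| ≤ ε)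
    (hrep : ∀ v ∈ V, C ⬝ᵥ ((v + δt • f v (μ v)) - v) ≤ -(2 * ε * δt))
    (hwide : ∀ s ∈ S, C ⬝ᵥ s < d → C ⬝ᵥ ((s + δt • f s (μ s)) - s) ≤ r) :
    ∀ s : ℕ → (Fin n → ℝ),
      s 0 ∈ S → C ⬝ᵥ s 0 < d →
      (∀ j : ℕ, s (j + 1) = s j + δt • f (s j) (μ (s j)) ∧ s (j + 1) ∈ S) →
      ∀ j : ℕ, C ⬝ᵥ s j < d := by
  intro s hs0 hsafe0 hstep
  have hBS : B ⊆ S := fun x hx => (hBdef ▸ hx).1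
  have hdisp (x y) : C ⬝ᵥ ((x + δt • y) - x) = δt * C ⬝ᵥ y := by
    rw [add_sub_cancel_left, dotProduct_smul, smul_eq_mul]
  have hdrift : ∀ x ∈ B, C ⬝ᵥ f x (μ x) ≤ 0 := by
    subst hBhull
    refine fun x hx => nonpos_of_mem_convexHull_of_abs_sub_le
      (φ := fun x => C ⬝ᵥ f x (μ x)) (ε := ε)
      (convexOn_dotProduct_affine_comp_affine C A₀ B₀ c₀ D e (convex_convexHull ℝ _))
      (fun y hy => ?_) (fun v hv => ?_) hx
    · simpa only [← hμaff y hy] using happrox y hy (μ y) (hμadm y (hBS hy))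
    · nlinarith [hdisp v (f v (μ v)) ▸ hrep v hv]
  intro j
  induction j with
  | zero => exact hsafe0
  | succ j ih =>
    have hsj : s j ∈ S := by cases j <;> [exact hs0; exact (hstep _).2]
    have hinc : C ⬝ᵥ s (j + 1) - C ⬝ᵥ s j = δt * C ⬝ᵥ f (s j) (μ (s j)) := by
      rw [(hstep j).1, ← dotProduct_sub, hdisp]
    refine lt_of_step_le_of_buffer (r := r) ih ?_ fun hnear => ?_
    · rw [hinc, ← hdisp]
      exact hwide _ hsj ih
    · have hBj : s j ∈ B := hBdef ▸ ⟨hsj, hnear, ih.le⟩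
      nlinarith [hdrift _ hBj]

/-- **Corollary 1 (discrete time).** Let `S ⊆ ℝⁿ` be compact convex, `A ⊆ ℝᵐ` compact
convex, `B := {s ∈ S : C s ∈ [d - r, d]}` the buffer, given as the convex hull of a finite
vertex set `V`. Let `μ : S → A` be affine on `B` and let `ε ≥ 0` be an approximation
measure with witnesses `A₀, B₀, c₀`. Assume the discrete repulsion condition
`C ((v + f(v, μ(v)) δt) - v) ≤ -2 ε δt` at every vertex `v ∈ V`, and that the buffer is
wide enough: `C ((s + f(s, μ(s)) δt) - s) ≤ r` for every safe `s ∈ S` (i.e. `C s < d`).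
Then every discrete closed-loop trajectory remaining in `S` and starting with
`C s₀ < d` satisfies `C s_j < d` for all `j`. -/
theorem policed_rl_safety_discrete {n m : ℕ}
    (S : Set (Fin n → ℝ)) (hScomp : IsCompact S) (hSconv : Convex ℝ S)
    (A : Set (Fin m → ℝ)) (hAcomp : IsCompact A) (hAconv : Convex ℝ A)
    (f : (Fin n → ℝ) → (Fin m → ℝ) → (Fin n → ℝ))
    (C : Fin n → ℝ) (d r : ℝ) (hr : 0 < r) (δt : ℝ) (hδt : 0 < δt)
    (B : Set (Fin n → ℝ)) (hBdef : B = {s ∈ S | C ⬝ᵥ s ∈ Set.Icc (d - r) d})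
    (V : Finset (Fin n → ℝ)) (hBhull : B = convexHull ℝ (V : Set (Fin n → ℝ)))
    (μ : (Fin n → ℝ) → (Fin m → ℝ)) (hμadm : ∀ s ∈ S, μ s ∈ A)
    (D : Matrix (Fin m) (Fin n) ℝ) (e : Fin m → ℝ)
    (hμaff : ∀ s ∈ B, μ s = D *ᵥ s + e)
    (ε : ℝ) (hε : 0 ≤ ε)
    (A₀ : Matrix (Fin n) (Fin n) ℝ) (B₀ : Matrix (Fin n) (Fin m) ℝ) (c₀ : Fin n → ℝ)
    (happrox : ∀ s ∈ B, ∀ a ∈ A, |C ⬝ᵥ f s a - C ⬝ᵥ (A₀ *ᵥ s + B₀ *ᵥ a + c₀)| ≤ ε)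
    (hrep : ∀ v ∈ V, C ⬝ᵥ ((v + δt • f v (μ v)) - v) ≤ -(2 * ε * δt))
    (hwide : ∀ s ∈ S, C ⬝ᵥ s < d → C ⬝ᵥ ((s + δt • f s (μ s)) - s) ≤ r) :
    ∀ s : ℕ → (Fin n → ℝ),
      s 0 ∈ S → C ⬝ᵥ s 0 < d →
      (∀ j : ℕ, s (j + 1) = s j + δt • f (s j) (μ (s j)) ∧ s (j + 1) ∈ S) →
      ∀ j : ℕ, C ⬝ᵥ s j < d :=
  policed_rl_safety_discrete_general S A f C d r δt hδt B hBdef V hBhull μ hμadm D e hμaff ε A₀ B₀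
    c₀ happrox hrep hwide
end
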